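/- arXiv:2507.03104 — 2 statements merged into one kernel-verified Lean document; each statement's English description precedes it below -/
import Mathlib

section
/- Let G be a simple mixed graph on n vertices with at least one edge or at least one arc. Then ν₁(G) ≤ max S, where S is the finite set consisting of all numbers d u + d v + d⁺ u + d⁺ v and d u + d v + d⁻ u + d⁻ v for pairs u, v with E u v = 1, together with all numbers d u + d v + d⁺ u + d⁻ v for pairs u, v with A u v = 1. -/
/-!
The integrated Laplacian is `diag(r) - M` with `M = 𝓘(G)` entrywise nonnegative and `r` its row
sums, which are exactly the integrated degrees. Take an eigenvector `x` for `ν`, scaled so that its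
entry of largest modulus, at `i`, is positive, and let `j` be a neighbour of `i` (`M i j ≠ 0`) on
which `x` is smallest. The eigen-equation at `i` and at `j` gives
`ν x i ≤ r i (x i - x j)` and `ν x j ≥ -r j (x i - x j)`, hence `ν ≤ 0` or `ν ≤ r i + r j`
(Anderson–Morley). A nonzero entry of `M` is an edge (diagonal blocks) or an arc (off-diagonal
blocks) of the simple graph, so `r i + r j` lies in `S`, whose elements are nonnegative.
-/

set_option linter.unusedSectionVars false

open Matrix Finset Polynomial

variable {V : Type*} [Fintype V] [DecidableEq V]

/-- Undirected adjacency matrix of the mixed graph with edge-multiplicity function `E`: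
`(u,v)`-entry `E u v` for `u ≠ v`, and `(v,v)`-entry `2 * E v v`. -/
def Au (E : V → V → ℕ) : Matrix V V ℝ :=
  Matrix.of fun u v => if u = v then ((2 * E v v : ℕ) : ℝ) else ((E u v : ℕ) : ℝ)

/-- Arc matrix of the mixed graph with arc-multiplicity function `A`. -/
def Bm (A : V → V → ℕ) : Matrix V V ℝ := Matrix.of fun u v => ((A u v : ℕ) : ℝ)

/-- Undirected degree `d v`. -/
def dU (E : V → V → ℕ) (v : V) : ℕ :=
  (∑ u ∈ Finset.univ.filter (fun u => u ≠ v), E v u) + 2 * E v v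

/-- Out-degree `d⁺ v`. -/
def dOut (A : V → V → ℕ) (v : V) : ℕ := ∑ u, A v u

/-- In-degree `d⁻ v`. -/
def dIn (A : V → V → ℕ) (v : V) : ℕ := ∑ u, A u v

/-- Integrated adjacency matrix `𝓘(G) = [[Aᵤ, B], [Bᵀ, Aᵤ]]`. -/
def intAdj (E A : V → V → ℕ) : Matrix (V ⊕ V) (V ⊕ V) ℝ :=
  Matrix.fromBlocks (Au E) (Bm A) (Bm A)ᵀ (Au E)

/-- Integrated degree matrix `𝓘ᴰ(G)`. -/
def intDeg (E A : V → V → ℕ) : Matrix (V ⊕ V) (V ⊕ V) ℝ :=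
  Matrix.diagonal (Sum.elim (fun v => ((dU E v + dOut A v : ℕ) : ℝ))
    (fun v => ((dU E v + dIn A v : ℕ) : ℝ)))

/-- Integrated Laplacian matrix `𝓘ᴸ(G) = 𝓘ᴰ(G) - 𝓘(G)`. -/
def intLap (E A : V → V → ℕ) : Matrix (V ⊕ V) (V ⊕ V) ℝ := intDeg E A - intAdj E A

/-- Integrated signless Laplacian matrix `𝓘Q(G) = 𝓘ᴰ(G) + 𝓘(G)`. -/
def intQ (E A : V → V → ℕ) : Matrix (V ⊕ V) (V ⊕ V) ℝ := intDeg E A + intAdj E A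

/-- A mixed graph is simple: multiplicities at most 1, no loops, no directed loops. -/
def IsSimple (E A : V → V → ℕ) : Prop :=
  (∀ u v, E u v ≤ 1) ∧ (∀ u v, A u v ≤ 1) ∧ (∀ v, E v v = 0) ∧ (∀ v, A v v = 0)

/-- Number of edges (excluding loops): `e(G) = (1/2)·Σ_{u ≠ v} E u v`. -/
noncomputable def numEdges (E : V → V → ℕ) : ℝ :=
  (∑ u, ∑ v ∈ Finset.univ.filter (fun v => v ≠ u), (E u v : ℝ)) / 2

/-- Number of loops: `l(G) = Σ_v E v v`. -/
noncomputable def numLoops (E : V → V → ℕ) : ℝ := ∑ v, (E v v : ℝ)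

/-- Number of arcs (including directed loops): `a(G) = Σ_{u,v} A u v`. -/
noncomputable def numArcs (A : V → V → ℕ) : ℝ := ∑ u, ∑ v, (A u v : ℝ)

lemma intAdj_isHermitian (E A : V → V → ℕ) (hE : ∀ u v, E u v = E v u) :
    (intAdj E A).IsHermitian := by
  have hAu : (Au E)ᵀ = Au E := by
    ext u v
    by_cases h : u = v
    · subst h; rfl
    · simp [Au, Matrix.transpose_apply, h, Ne.symm h, hE u v]
  show (intAdj E A)ᴴ = intAdj E A
  rw [Matrix.conjTranspose_eq_transpose_of_trivial]
  unfold intAdj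
  rw [Matrix.fromBlocks_transpose, hAu, Matrix.transpose_transpose]

lemma intLap_isHermitian (E A : V → V → ℕ) (hE : ∀ u v, E u v = E v u) :
    (intLap E A).IsHermitian :=
  (Matrix.isHermitian_diagonal _).sub (intAdj_isHermitian E A hE)

lemma intQ_isHermitian (E A : V → V → ℕ) (hE : ∀ u v, E u v = E v u) :
    (intQ E A).IsHermitian :=
  (Matrix.isHermitian_diagonal _).add (intAdj_isHermitian E A hE)

/-- The non-increasing rearrangement of a finite tuple of reals. -/
noncomputable def sortDesc {N : ℕ} (f : Fin N → ℝ) : Fin N → ℝ :=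
  fun i => (f ∘ Tuple.sort f) i.rev

/-- The eigenvalues of the integrated Laplacian matrix `𝓘ᴸ(G)`, in non-increasing order:
`nuT E A hE i` is `ν_{i+1}(G)` (0-indexed). -/
noncomputable def nuT {n : ℕ} (E A : Fin n → Fin n → ℕ) (hE : ∀ u v, E u v = E v u) :
    Fin (n + n) → ℝ :=
  sortDesc (fun i => (intLap_isHermitian E A hE).eigenvalues (finSumFinEquiv.symm i))

/-- The eigenvalues of the integrated signless Laplacian matrix `𝓘Q(G)`, in non-increasing
order: `xiT E A hE i` is `ξ_{i+1}(G)` (0-indexed). -/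
noncomputable def xiT {n : ℕ} (E A : Fin n → Fin n → ℕ) (hE : ∀ u v, E u v = E v u) :
    Fin (n + n) → ℝ :=
  sortDesc (fun i => (intQ_isHermitian E A hE).eigenvalues (finSumFinEquiv.symm i))

/-- The eigenvalues of the integrated adjacency matrix `𝓘(G)`, in non-increasing order:
`lamT E A hE i` is `λ_{i+1}(G)` (0-indexed). -/
noncomputable def lamT {n : ℕ} (E A : Fin n → Fin n → ℕ) (hE : ∀ u v, E u v = E v u) :
    Fin (n + n) → ℝ :=
  sortDesc (fun i => (intAdj_isHermitian E A hE).eigenvalues (finSumFinEquiv.symm i))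

namespace Matrix

variable {ι : Type*} [Fintype ι] [DecidableEq ι] {M : Matrix ι ι ℝ} {ν : ℝ} {x : ι → ℝ}

lemma laplacian_mulVec_apply (k : ι) :
    (((diagonal fun i => ∑ j, M i j) - M) *ᵥ x) k = (∑ j, M k j) * x k - ∑ j, M k j * x j := by
  rw [sub_mulVec, Pi.sub_apply, mulVec_diagonal]; rfl

lemma le_zero_or_exists_le_rowSum_add_rowSum_of_pos_max (hM : ∀ i j, 0 ≤ M i j)
    (hx : (diagonal (fun i => ∑ j, M i j) - M) *ᵥ x = ν • x)
    {i : ι} (hi : 0 < x i) (hmax : ∀ k, x k ≤ x i) :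
    ν ≤ 0 ∨ ∃ a b, M a b ≠ 0 ∧ ν ≤ (∑ k, M a k) + ∑ k, M b k := by
  have heq k : (∑ j, M k j) * x k - ∑ j, M k j * x j = ν * x k := by
    rw [← laplacian_mulVec_apply, hx, Pi.smul_apply, smul_eq_mul]
  by_cases hisol : ∀ j, M i j = 0
  · left
    have := heq i
    simp only [hisol, zero_mul, sum_const_zero, sub_zero] at this
    nlinarith
  obtain ⟨j, hj, hjmin⟩ := exists_min_image {j | M i j ≠ 0} x
    (by simpa [Finset.Nonempty] using hisol)
  have hij : M i j ≠ 0 := (mem_filter.mp hj).2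
  have hlow : (∑ k, M i k) * x j ≤ ∑ k, M i k * x k := by
    rw [sum_mul]
    refine sum_le_sum fun k _ => ?_
    rcases eq_or_ne (M i k) 0 with hk | hk
    · simp [hk]
    · exact mul_le_mul_of_nonneg_left (hjmin k (by simpa using hk)) (hM i k)
  have hupp : ∑ k, M j k * x k ≤ (∑ k, M j k) * x i := by
    rw [sum_mul]
    exact sum_le_sum fun k _ => mul_le_mul_of_nonneg_left (hmax k) (hM j k)
  have hνi := heq i
  have hνj := heq j
  rcases (hmax j).eq_or_lt with hji | hji
  · left
    rw [hji] at hlow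
    nlinarith
  · right
    refine ⟨i, j, hij, le_of_mul_le_mul_right ?_ (sub_pos.mpr hji)⟩
    nlinarith

lemma le_zero_or_exists_le_rowSum_add_rowSum (hM : ∀ i j, 0 ≤ M i j) (hx0 : x ≠ 0)
    (hx : (diagonal (fun i => ∑ j, M i j) - M) *ᵥ x = ν • x) :
    ν ≤ 0 ∨ ∃ a b, M a b ≠ 0 ∧ ν ≤ (∑ k, M a k) + ∑ k, M b k := by
  obtain ⟨k, hk⟩ := Function.ne_iff.mp hx0
  have : Nonempty ι := ⟨k⟩
  obtain ⟨i, -, hi⟩ := exists_max_image univ (fun k => |x k|) univ_nonempty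
  have hxi : x i ≠ 0 := abs_pos.mp <| (abs_pos.mpr hk).trans_le (hi k (mem_univ k))
  rcases hxi.lt_or_gt with hneg | hpos
  · refine le_zero_or_exists_le_rowSum_add_rowSum_of_pos_max hM (x := -x) ?_
      (neg_pos.mpr hneg) fun k => ?_
    · rw [mulVec_neg, hx, smul_neg]
    · have := hi k (mem_univ k)
      rw [abs_of_neg hneg] at this
      exact (neg_le_abs (x k)).trans this
  · refine le_zero_or_exists_le_rowSum_add_rowSum_of_pos_max hM hx hpos fun k => ?_
    have := hi k (mem_univ k)
    rw [abs_of_pos hpos] at this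
    exact (le_abs_self (x k)).trans this

lemma IsHermitian.eigenvalues_le_zero_or_exists_le_rowSum_add_rowSum {L : Matrix ι ι ℝ}
    (hL : L.IsHermitian) (hM : ∀ i j, 0 ≤ M i j) (hLM : L = diagonal (fun i => ∑ j, M i j) - M)
    (k : ι) :
    hL.eigenvalues k ≤ 0 ∨ ∃ a b, M a b ≠ 0 ∧ hL.eigenvalues k ≤ (∑ j, M a j) + ∑ j, M b j := by
  subst hLM
  exact le_zero_or_exists_le_rowSum_add_rowSum hM
    (fun h => hL.eigenvectorBasis.orthonormal.ne_zero k (WithLp.ofLp_injective 2 h))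
    (hL.mulVec_eigenvectorBasis k)

end Matrix

section MixedGraph

variable (E A : V → V → ℕ)

lemma Au_ne_zero_iff (u v : V) : Au E u v ≠ 0 ↔ E u v ≠ 0 := by
  by_cases h : u = v
  · subst h; simp [Au]
  · simp [Au, h]

lemma sum_Au_apply (v : V) : ∑ u, Au E v u = dU E v := by
  rw [← add_sum_erase _ _ (mem_univ v), dU, filter_ne', add_comm, Nat.cast_add, Nat.cast_sum]
  congr 1
  · exact sum_congr rfl fun u hu => by simp [Au, (ne_of_mem_erase hu).symm]
  · simp [Au]

lemma intAdj_nonneg (a b : V ⊕ V) : 0 ≤ intAdj E A a b := by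
  rcases a with u | u <;> rcases b with v | v <;>
    simp only [intAdj, fromBlocks_apply₁₁, fromBlocks_apply₁₂, fromBlocks_apply₂₁,
      fromBlocks_apply₂₂, transpose_apply, Au, Bm, of_apply] <;>
    (try split_ifs) <;> positivity

lemma sum_intAdj_inl (v : V) : ∑ b, intAdj E A (.inl v) b = ((dU E v + dOut A v : ℕ) : ℝ) := by
  simp [Fintype.sum_sum_type, intAdj, sum_Au_apply, Bm, dOut]

lemma sum_intAdj_inr (v : V) : ∑ b, intAdj E A (.inr v) b = ((dU E v + dIn A v : ℕ) : ℝ) := by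
  simp [Fintype.sum_sum_type, intAdj, sum_Au_apply, Bm, dIn, add_comm]

lemma intLap_eq_diagonal_sub :
    intLap E A = diagonal (fun a => ∑ b, intAdj E A a b) - intAdj E A := by
  rw [intLap, intDeg]
  congr 2
  ext (v | v)
  · exact (sum_intAdj_inl E A v).symm
  · exact (sum_intAdj_inr E A v).symm

end MixedGraph

section DegreeSums

variable {E A : V → V → ℕ}

variable (E A) in
noncomputable def edgeDegreeSums : Finset ℝ :=
  (((Finset.univ ×ˢ Finset.univ).filter
      (fun p : V × V => E p.1 p.2 = 1)).image
      (fun p => ((dU E p.1 + dU E p.2 + dOut A p.1 + dOut A p.2 : ℕ) : ℝ)))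
  ∪ (((Finset.univ ×ˢ Finset.univ).filter
      (fun p : V × V => E p.1 p.2 = 1)).image
      (fun p => ((dU E p.1 + dU E p.2 + dIn A p.1 + dIn A p.2 : ℕ) : ℝ)))
  ∪ (((Finset.univ ×ˢ Finset.univ).filter
      (fun p : V × V => A p.1 p.2 = 1)).image
      (fun p => ((dU E p.1 + dU E p.2 + dOut A p.1 + dIn A p.2 : ℕ) : ℝ)))

lemma mem_edgeDegreeSums_of_edge_out {u v : V} (h : E u v = 1) :
    ((dU E u + dU E v + dOut A u + dOut A v : ℕ) : ℝ) ∈ edgeDegreeSums E A := by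
  simp only [edgeDegreeSums, mem_union, mem_image, mem_filter, mem_product, mem_univ, true_and]
  exact .inl (.inl ⟨(u, v), h, rfl⟩)

lemma mem_edgeDegreeSums_of_edge_in {u v : V} (h : E u v = 1) :
    ((dU E u + dU E v + dIn A u + dIn A v : ℕ) : ℝ) ∈ edgeDegreeSums E A := by
  simp only [edgeDegreeSums, mem_union, mem_image, mem_filter, mem_product, mem_univ, true_and]
  exact .inl (.inr ⟨(u, v), h, rfl⟩)

lemma mem_edgeDegreeSums_of_arc {u v : V} (h : A u v = 1) :
    ((dU E u + dU E v + dOut A u + dIn A v : ℕ) : ℝ) ∈ edgeDegreeSums E A := by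
  simp only [edgeDegreeSums, mem_union, mem_image, mem_filter, mem_product, mem_univ, true_and]
  exact .inr ⟨(u, v), h, rfl⟩

lemma nonneg_of_mem_edgeDegreeSums {s : ℝ} (hs : s ∈ edgeDegreeSums E A) : 0 ≤ s := by
  simp only [edgeDegreeSums, mem_union, mem_image] at hs
  obtain ((⟨p, -, rfl⟩ | ⟨p, -, rfl⟩) | ⟨p, -, rfl⟩) := hs <;> positivity

lemma edgeDegreeSums_nonempty (hS : IsSimple E A)
    (hedge : (∃ u v, u ≠ v ∧ 1 ≤ E u v) ∨ (∃ u v, 1 ≤ A u v)) :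
    (edgeDegreeSums E A).Nonempty := by
  rcases hedge with ⟨u, v, -, h⟩ | ⟨u, v, h⟩
  · exact ⟨_, mem_edgeDegreeSums_of_edge_out (A := A) (le_antisymm (hS.1 u v) h)⟩
  · exact ⟨_, mem_edgeDegreeSums_of_arc (E := E) (le_antisymm (hS.2.1 u v) h)⟩

lemma sum_intAdj_add_sum_intAdj_mem_edgeDegreeSums (hE1 : ∀ u v, E u v ≤ 1)
    (hA1 : ∀ u v, A u v ≤ 1) {a b : V ⊕ V} (hab : intAdj E A a b ≠ 0) :
    (∑ c, intAdj E A a c) + ∑ c, intAdj E A b c ∈ edgeDegreeSums E A := by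
  have edge_eq_one {u v} (h : Au E u v ≠ 0) : E u v = 1 := by
    have := (Au_ne_zero_iff E u v).mp h; have := hE1 u v; omega
  have arc_eq_one {u v} (h : Bm A u v ≠ 0) : A u v = 1 := by
    have : A u v ≠ 0 := by simpa [Bm] using h
    have := hA1 u v; omega
  rcases a with u | u <;> rcases b with v | v <;>
    simp only [intAdj, fromBlocks_apply₁₁, fromBlocks_apply₁₂, fromBlocks_apply₂₁,
      fromBlocks_apply₂₂, transpose_apply] at hab <;>
    simp only [sum_intAdj_inl, sum_intAdj_inr]
  · convert mem_edgeDegreeSums_of_edge_out (A := A) (edge_eq_one hab) using 1; push_cast; ring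
  · convert mem_edgeDegreeSums_of_arc (E := E) (arc_eq_one hab) using 1; push_cast; ring
  · convert mem_edgeDegreeSums_of_arc (E := E) (arc_eq_one hab) using 1; push_cast; ring
  · convert mem_edgeDegreeSums_of_edge_in (A := A) (edge_eq_one hab) using 1; push_cast; ring

end DegreeSums

lemma intLap_eigenvalues_le_max' {E A : V → V → ℕ} (hE : ∀ u v, E u v = E v u)
    (hS : IsSimple E A) (hne : (edgeDegreeSums E A).Nonempty) (k : V ⊕ V) :
    (intLap_isHermitian E A hE).eigenvalues k ≤ (edgeDegreeSums E A).max' hne := by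
  rcases (intLap_isHermitian E A hE).eigenvalues_le_zero_or_exists_le_rowSum_add_rowSum
      (intAdj_nonneg E A) (intLap_eq_diagonal_sub E A) k with hle | ⟨a, b, hab, hle⟩
  · obtain ⟨s, hs⟩ := hne
    exact hle.trans <| (nonneg_of_mem_edgeDegreeSums hs).trans (le_max' _ s hs)
  · exact hle.trans <| le_max' _ _ <|
      sum_intAdj_add_sum_intAdj_mem_edgeDegreeSums hS.1 hS.2.1 hab

/-- `ν₁(G) ≤ max S` where `S` consists of the numbers
`d u + d v + d⁺ u + d⁺ v` and `d u + d v + d⁻ u + d⁻ v` over pairs `u, v` with `E u v = 1`,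
together with `d u + d v + d⁺ u + d⁻ v` over pairs `u, v` with `A u v = 1`.  (`max S` is
expressed by: some element of the finite nonempty set `S` bounds `ν₁(G)` and all of `S`.) -/
theorem stmt14 (n : ℕ) (E A : Fin n → Fin n → ℕ) (hE : ∀ u v, E u v = E v u)
    (hS : IsSimple E A)
    (hedge : (∃ u v, u ≠ v ∧ 1 ≤ E u v) ∨ (∃ u v, 1 ≤ A u v))
    (S : Finset ℝ)
    (hSdef : S =
      (((Finset.univ ×ˢ Finset.univ).filter
          (fun p : Fin n × Fin n => E p.1 p.2 = 1)).image
          (fun p => ((dU E p.1 + dU E p.2 + dOut A p.1 + dOut A p.2 : ℕ) : ℝ)))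
      ∪ (((Finset.univ ×ˢ Finset.univ).filter
          (fun p : Fin n × Fin n => E p.1 p.2 = 1)).image
          (fun p => ((dU E p.1 + dU E p.2 + dIn A p.1 + dIn A p.2 : ℕ) : ℝ)))
      ∪ (((Finset.univ ×ˢ Finset.univ).filter
          (fun p : Fin n × Fin n => A p.1 p.2 = 1)).image
          (fun p => ((dU E p.1 + dU E p.2 + dOut A p.1 + dIn A p.2 : ℕ) : ℝ)))) :
    ∃ x ∈ S,
      nuT E A hE ⟨0, by rcases hedge with ⟨u, -⟩ | ⟨u, -⟩ <;> (have := u.pos; omega)⟩ ≤ x ∧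
        ∀ y ∈ S, y ≤ x := by
  obtain rfl : S = edgeDegreeSums E A := hSdef
  have hne := edgeDegreeSums_nonempty hS hedge
  refine ⟨_, max'_mem _ hne, ?_, fun y hy => le_max' _ y hy⟩
  -- `nuT` only reorders the eigenvalues of `intLap E A`.
  exact intLap_eigenvalues_le_max' hE hS hne _
end

section
/- For every simple mixed graph G on n ≥ 1 vertices, min{δ₁(G), δ₂(G)} ≤ (1/2)·ξ₁(G) ≤ max{Δ₁(G), Δ₂(G)}, where δ₁(G) = min_v (d v + d⁺ v), δ₂(G) = min_v (d v + d⁻ v), Δ₁(G) = max_v (d v + d⁺ v), and Δ₂(G) = max_v (d v + d⁻ v). -/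
/-!
`𝓘Q(G)` is a symmetric matrix with nonnegative entries whose row sums are `2 (d v + d⁺ v)` and
`2 (d v + d⁻ v)`. Gershgorin's theorem bounds every eigenvalue by the largest row sum, and the
Rayleigh quotient of the all-ones vector, which is the average row sum, is at most `ξ₁(G)`.
-/

set_option linter.unusedSectionVars false

open Matrix Finset Polynomial

variable {V : Type*} [Fintype V] [DecidableEq V]

namespace Matrix

variable {N : Type*} [Fintype N] [DecidableEq N]

/-- For a nonnegative matrix, Gershgorin's disc around `M k k` ends at the `k`-th row sum. -/
theorem le_of_hasEigenvalue_of_sum_row_le {M : Matrix N N ℝ} {μ C : ℝ}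
    (hM : ∀ i j, 0 ≤ M i j) (hC : ∀ i, ∑ j, M i j ≤ C)
    (hμ : Module.End.HasEigenvalue (toLin' M) μ) : μ ≤ C := by
  obtain ⟨k, hk⟩ := eigenvalue_mem_ball hμ
  have hrow : M k k + ∑ j ∈ univ.erase k, M k j = ∑ j, M k j :=
    add_sum_erase _ _ (mem_univ k)
  have hnorm : ∑ j ∈ univ.erase k, ‖M k j‖ = ∑ j ∈ univ.erase k, M k j :=
    sum_congr rfl fun j _ => Real.norm_of_nonneg (hM k j)
  rw [Metric.mem_closedBall, Real.dist_eq, hnorm] at hk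
  linarith [le_abs_self (μ - M k k), hC k]

theorem IsHermitian.hasEigenvalue_eigenvalues {M : Matrix N N ℝ} (hM : M.IsHermitian) (k : N) :
    Module.End.HasEigenvalue (toLin' M) (hM.eigenvalues k) :=
  Module.End.hasEigenvalue_iff_mem_spectrum.mpr <| by
    rw [spectrum_toLin']
    exact hM.eigenvalues_mem_spectrum_real k

theorem IsHermitian.eigenvalues_le_of_sum_row_le {M : Matrix N N ℝ} (hM : M.IsHermitian) {C : ℝ}
    (hnonneg : ∀ i j, 0 ≤ M i j) (hC : ∀ i, ∑ j, M i j ≤ C) (k : N) : hM.eigenvalues k ≤ C :=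
  le_of_hasEigenvalue_of_sum_row_le hnonneg hC (hM.hasEigenvalue_eigenvalues k)

/-- Expand `x` in the orthonormal eigenbasis: `⟪x, M x⟫ = ∑ₖ λₖ ⟪x, bₖ⟫²`. -/
theorem IsHermitian.dotProduct_mulVec_le {M : Matrix N N ℝ} (hM : M.IsHermitian) {c : ℝ}
    (hc : ∀ k, hM.eigenvalues k ≤ c) (x : N → ℝ) : x ⬝ᵥ M *ᵥ x ≤ c * (x ⬝ᵥ x) := by
  set b := hM.eigenvectorBasis
  set T := toEuclideanLin M
  have hT : T.IsSymmetric := isSymmetric_toEuclideanLin_iff.mpr hM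
  have hTb : ∀ k, T (b k) = hM.eigenvalues k • b k := fun k => by
    ext i
    simpa [T, b] using congrFun (hM.mulVec_eigenvectorBasis k) i
  set y : EuclideanSpace ℝ N := WithLp.toLp 2 x
  have hquad : x ⬝ᵥ M *ᵥ x = ∑ k, hM.eigenvalues k * inner ℝ y (b k) ^ 2 := by
    calc x ⬝ᵥ M *ᵥ x = inner ℝ y (T y) := dotProduct_comm _ _
      _ = _ := by
        rw [← b.sum_inner_mul_inner y (T y)]
        refine sum_congr rfl fun k _ => ?_
        rw [← hT, hTb, real_inner_smul_left, real_inner_comm (b k)]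
        ring
  have hnorm : x ⬝ᵥ x = ∑ k, inner ℝ y (b k) ^ 2 := by
    calc x ⬝ᵥ x = inner ℝ y y := dotProduct_comm _ _
      _ = _ := by
        rw [← b.sum_inner_mul_inner y y]
        exact sum_congr rfl fun k _ => by rw [real_inner_comm (b k), sq]
  rw [hquad, hnorm, mul_sum]
  exact sum_le_sum fun k _ => mul_le_mul_of_nonneg_right (hc k) (sq_nonneg _)

theorem IsHermitian.exists_le_eigenvalues_of_le_sum_row [Nonempty N] {M : Matrix N N ℝ}
    (hM : M.IsHermitian) {c : ℝ} (hc : ∀ i, c ≤ ∑ j, M i j) : ∃ k, c ≤ hM.eigenvalues k := by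
  obtain ⟨k, -, hk⟩ := exists_mem_eq_sup' univ_nonempty hM.eigenvalues
  refine ⟨k, ?_⟩
  have hquad := hM.dotProduct_mulVec_le (fun k' => hk ▸ le_sup' hM.eigenvalues (mem_univ k')) 1
  have hsum : ∑ _i : N, c ≤ ∑ i, ∑ j, M i j := sum_le_sum fun i _ => hc i
  have hones : (1 : N → ℝ) ⬝ᵥ M *ᵥ 1 = ∑ i, ∑ j, M i j := by simp [dotProduct, mulVec]
  have hcard : (1 : N → ℝ) ⬝ᵥ 1 = Fintype.card N := by simp [dotProduct]
  rw [hones, hcard] at hquad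
  rw [sum_const, card_univ, nsmul_eq_mul] at hsum
  exact le_of_mul_le_mul_left (hsum.trans (hquad.trans_eq (mul_comm _ _)))
    (Nat.cast_pos.mpr Fintype.card_pos)

end Matrix

theorem le_sortDesc_zero {N : ℕ} (hN : 0 < N) (f : Fin N → ℝ) (i : Fin N) :
    f i ≤ sortDesc f ⟨0, hN⟩ := by
  obtain ⟨j, rfl⟩ := (Tuple.sort f).surjective i
  refine Tuple.monotone_sort f (Fin.le_def.mpr ?_)
  simp only [Fin.val_rev]
  omega

theorem exists_sortDesc_zero_eq {N : ℕ} (hN : 0 < N) (f : Fin N → ℝ) :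
    ∃ i, sortDesc f ⟨0, hN⟩ = f i :=
  ⟨_, rfl⟩

theorem sum_Au_row (E : V → V → ℕ) (v : V) : ∑ u, Au E v u = dU E v := by
  rw [← sum_filter_add_sum_filter_not univ (fun u => u ≠ v)]
  simp only [not_not, filter_eq', if_pos (mem_univ v), sum_singleton, dU]
  push_cast
  congr 1
  · exact sum_congr rfl fun u hu => if_neg (mem_filter.mp hu).2.symm
  · simp [Au]

theorem sum_intAdj_row (E A : V → V → ℕ) (i : V ⊕ V) :
    ∑ j, intAdj E A i j = intDeg E A i i := by
  rcases i with v | v <;>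
    simp [intAdj, intDeg, Fintype.sum_sum_type, sum_Au_row, Bm, dOut, dIn, add_comm]

theorem sum_intQ_row (E A : V → V → ℕ) (i : V ⊕ V) :
    ∑ j, intQ E A i j = 2 * intDeg E A i i := by
  have hdiag : ∑ j, intDeg E A i j = intDeg E A i i := by simp [intDeg, diagonal_apply]
  simp only [intQ, Matrix.add_apply, sum_add_distrib, sum_intAdj_row, hdiag]
  exact (two_mul _).symm

theorem intQ_nonneg (E A : V → V → ℕ) (i j : V ⊕ V) : 0 ≤ intQ E A i j := by
  rcases i with v | v <;> rcases j with u | u <;>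
    simp only [intQ, intDeg, intAdj, Au, Bm, Matrix.add_apply, diagonal_apply, fromBlocks_apply₁₁,
      fromBlocks_apply₁₂, fromBlocks_apply₂₁, fromBlocks_apply₂₂, transpose_apply, of_apply,
      Sum.elim_inl, Sum.elim_inr] <;>
    split_ifs <;> positivity

theorem min_inf'_le_intDeg (E A : V → V → ℕ) (hV : (univ : Finset V).Nonempty) (i : V ⊕ V) :
    ((min (univ.inf' hV fun v => dU E v + dOut A v) (univ.inf' hV fun v => dU E v + dIn A v) :
      ℕ) : ℝ) ≤ intDeg E A i i := by
  rcases i with v | v <;> simp only [intDeg, diagonal_apply_eq, Sum.elim_inl, Sum.elim_inr] <;>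
    gcongr
  exacts [(min_le_left _ _).trans (inf'_le _ (mem_univ v)),
    (min_le_right _ _).trans (inf'_le _ (mem_univ v))]

theorem intDeg_le_max_sup (E A : V → V → ℕ) (i : V ⊕ V) :
    intDeg E A i i ≤ ((max (univ.sup fun v => dU E v + dOut A v)
      (univ.sup fun v => dU E v + dIn A v) : ℕ) : ℝ) := by
  rcases i with v | v <;> simp only [intDeg, diagonal_apply_eq, Sum.elim_inl, Sum.elim_inr] <;>
    gcongr
  exacts [(le_sup (f := fun v => dU E v + dOut A v) (mem_univ v)).trans (le_max_left _ _),
    (le_sup (f := fun v => dU E v + dIn A v) (mem_univ v)).trans (le_max_right _ _)]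

/-- for every simple mixed graph `G` on `n ≥ 1` vertices,
`min{δ₁(G), δ₂(G)} ≤ (1/2)·ξ₁(G) ≤ max{Δ₁(G), Δ₂(G)}`. -/
theorem stmt19 (n : ℕ) (hn : 0 < n) (E A : Fin n → Fin n → ℕ)
    (hE : ∀ u v, E u v = E v u) :
    ((min (Finset.univ.inf' (Finset.univ_nonempty_iff.mpr ⟨⟨0, hn⟩⟩)
          (fun v => dU E v + dOut A v))
        (Finset.univ.inf' (Finset.univ_nonempty_iff.mpr ⟨⟨0, hn⟩⟩)
          (fun v => dU E v + dIn A v)) : ℕ) : ℝ) ≤ (1 / 2) * xiT E A hE ⟨0, by omega⟩ ∧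
      (1 / 2) * xiT E A hE ⟨0, by omega⟩ ≤
        ((max (Finset.univ.sup (fun v => dU E v + dOut A v))
          (Finset.univ.sup (fun v => dU E v + dIn A v)) : ℕ) : ℝ) := by
  have hV : (univ : Finset (Fin n)).Nonempty := univ_nonempty_iff.mpr ⟨⟨0, hn⟩⟩
  have : Nonempty (Fin n ⊕ Fin n) := ⟨Sum.inl ⟨0, hn⟩⟩
  have hM := intQ_isHermitian E A hE
  obtain ⟨k, hk⟩ := hM.exists_le_eigenvalues_of_le_sum_row fun i => by
    rw [sum_intQ_row]
    exact mul_le_mul_of_nonneg_left (min_inf'_le_intDeg E A hV i) zero_le_two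
  have hle : ∀ i, hM.eigenvalues i ≤ _ := hM.eigenvalues_le_of_sum_row_le (intQ_nonneg E A)
    fun i => by
      rw [sum_intQ_row]
      exact mul_le_mul_of_nonneg_left (intDeg_le_max_sup E A i) zero_le_two
  set ev := fun i => hM.eigenvalues (finSumFinEquiv.symm i)
  obtain ⟨i, hi⟩ := exists_sortDesc_zero_eq (by omega : 0 < n + n) ev
  have hmax := le_sortDesc_zero (by omega : 0 < n + n) ev (finSumFinEquiv k)
  simp only [ev, Equiv.symm_apply_apply] at hmax
  constructor <;> unfold xiT <;> linarith [hle (finSumFinEquiv.symm i)]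
end
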